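/- arXiv:2403.00202 — 6 statements merged into one kernel-verified Lean document; each statement's English description precedes it below -/
import Mathlib

section
/- Let Z and Ẑ be two functions from {1,...,n} to {1,...,K}, and let Z and Ẑ' denote the n×K matrices of dummy (one-hot) encodings of these labelings. Let n_min be the minimum over all z ∈ {1,...,K} of the counts #{k : z_k = z} and #{k : ẑ_k = z}, set α = n_min/n and δ = (1/n)·#{k : ẑ_k ≠ z_k}. If α > 0, then the operator 2-norm of the difference of the orthogonal projections onto the column spaces of the two dummy matrices satisfies ‖P_Z − P_Ẑ‖₂ ≤ √(2δ/α). -/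
/-!
For orthogonal projections `P` and `Q`, the vector `(P - Q) x` splits orthogonally as
`P (1 - Q) x - (1 - P) Q x`, so `‖P - Q‖ ≤ max ‖P (1 - Q)‖ ‖(1 - P) Q‖`. Writing `P_A = (A⁺)ᵀ Aᵀ`
and using `Bᵀ (1 - P_B) = 0` gives `P_A (1 - P_B) = (A⁺)ᵀ (A - B)ᵀ (1 - P_B)`, hence
`‖P_A - P_B‖ ≤ max ‖A⁺‖ ‖B⁺‖ * ‖A - B‖`. For a dummy matrix, `‖A⁺‖² = ‖(AᵀA)⁻¹‖` is the reciprocal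
of the smallest cluster size, and `‖Z - Ẑ‖²` is at most the squared Frobenius norm, which is twice
the number of relabelled points.
-/

open Matrix

/-- Operator 2-norm of a real matrix, via the induced Euclidean linear map. -/
noncomputable def l2OpNorm {m n : ℕ} (A : Matrix (Fin m) (Fin n) ℝ) : ℝ :=
  ‖LinearMap.toContinuousLinearMap (Matrix.toEuclideanLin A)‖

/-- Dummy (one-hot) encoding of a labeling. -/
def dummyMatrix {n K : ℕ} (z : Fin n → Fin K) : Matrix (Fin n) (Fin K) ℝ :=
  fun k j => if z k = j then 1 else 0

/-- Orthogonal projection onto the column space of a full-column-rank matrix. -/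
noncomputable def colProj {n K : ℕ} (M : Matrix (Fin n) (Fin K) ℝ) :
    Matrix (Fin n) (Fin n) ℝ :=
  M * (Mᵀ * M)⁻¹ * Mᵀ

/-- Number of indices with label `v`. -/
def labelCount {n K : ℕ} (z : Fin n → Fin K) (v : Fin K) : ℕ :=
  (Finset.univ.filter (fun k => z k = v)).card

open scoped InnerProductSpace

namespace ContinuousLinearMap

variable {𝕜 E : Type*} [RCLike 𝕜] [NormedAddCommGroup E] [InnerProductSpace 𝕜 E] [CompleteSpace E]

theorem inner_apply_one_sub_apply_eq_zero {P : E →L[𝕜] E} (hP : IsStarProjection P) (x y : E) :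
    ⟪P x, (1 - P) y⟫_𝕜 = 0 := by
  rw [hP.isSelfAdjoint.isSymmetric.apply_clm, ← mul_apply_eq_comp, hP.mul_one_sub_self,
    _root_.zero_apply, inner_zero_right]

theorem norm_sq_apply_add_norm_sq_one_sub_apply {P : E →L[𝕜] E} (hP : IsStarProjection P)
    (x : E) : ‖P x‖ ^ 2 + ‖(1 - P) x‖ ^ 2 = ‖x‖ ^ 2 := by
  have h := norm_add_sq_eq_norm_sq_add_norm_sq_of_inner_eq_zero _ _
    (inner_apply_one_sub_apply_eq_zero hP x x)
  rw [_root_.sub_apply, one_apply_eq_self, add_sub_cancel] at h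
  rw [sq, sq, sq, h, _root_.sub_apply, one_apply_eq_self]

theorem norm_sub_le_max_of_isStarProjection {P Q : E →L[𝕜] E} (hP : IsStarProjection P)
    (hQ : IsStarProjection Q) : ‖P - Q‖ ≤ max ‖P * (1 - Q)‖ ‖(1 - P) * Q‖ := by
  set c := max ‖P * (1 - Q)‖ ‖(1 - P) * Q‖
  refine opNorm_le_bound _ (le_max_of_le_left (norm_nonneg _)) fun x => ?_
  have hsplit : (P - Q) x = P ((1 - Q) x) - (1 - P) (Q x) := by
    simp only [_root_.sub_apply, one_apply_eq_self, map_sub]; abel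
  have hu : ‖P ((1 - Q) x)‖ ≤ c * ‖(1 - Q) x‖ := by
    calc ‖P ((1 - Q) x)‖ = ‖(P * (1 - Q)) ((1 - Q) x)‖ := by
          rw [mul_apply_eq_comp, ← mul_apply_eq_comp (1 - Q), hQ.one_sub.isIdempotentElem.eq]
      _ ≤ c * ‖(1 - Q) x‖ := by grw [le_opNorm]; gcongr; exact le_max_left _ _
  have hv : ‖(1 - P) (Q x)‖ ≤ c * ‖Q x‖ := by
    calc ‖(1 - P) (Q x)‖ = ‖((1 - P) * Q) (Q x)‖ := by
          rw [mul_apply_eq_comp, ← mul_apply_eq_comp Q, hQ.isIdempotentElem.eq]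
      _ ≤ c * ‖Q x‖ := by grw [le_opNorm]; gcongr; exact le_max_right _ _
  have horth : ⟪P ((1 - Q) x), (1 - P) (Q x)⟫_𝕜 = 0 := inner_apply_one_sub_apply_eq_zero hP _ _
  refine le_of_sq_le_sq ?_ (by positivity)
  calc ‖(P - Q) x‖ ^ 2 = ‖P ((1 - Q) x)‖ ^ 2 + ‖(1 - P) (Q x)‖ ^ 2 := by
        rw [hsplit, @norm_sub_sq 𝕜, horth, map_zero]; ring
    _ ≤ (c * ‖(1 - Q) x‖) ^ 2 + (c * ‖Q x‖) ^ 2 := by gcongr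
    _ = (c * ‖x‖) ^ 2 := by
        rw [mul_pow, mul_pow, mul_pow, ← mul_add, add_comm,
          norm_sq_apply_add_norm_sq_one_sub_apply hQ]

end ContinuousLinearMap

open scoped Matrix.Norms.L2Operator

theorem l2OpNorm_eq_norm {m n : ℕ} (A : Matrix (Fin m) (Fin n) ℝ) : l2OpNorm A = ‖A‖ := rfl

namespace Matrix

theorem l2_opNorm_transpose {m n : Type*} [Fintype m] [Fintype n] [DecidableEq m]
    [DecidableEq n] (A : Matrix m n ℝ) : ‖Aᵀ‖ = ‖A‖ := by
  simpa using l2_opNorm_conjTranspose A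

theorem l2_opNorm_mul_transpose_self {m n : Type*} [Fintype m] [Fintype n] [DecidableEq m]
    [DecidableEq n] (A : Matrix m n ℝ) : ‖A * Aᵀ‖ = ‖A‖ * ‖A‖ := by
  simpa [l2_opNorm_transpose] using l2_opNorm_conjTranspose_mul_self Aᵀ

theorem l2_opNorm_sq_le_sum_sq {m n : Type*} [Fintype m] [Fintype n] [DecidableEq n]
    (A : Matrix m n ℝ) : ‖A‖ ^ 2 ≤ ∑ i, ∑ j, A i j ^ 2 := by
  set S := ∑ i, ∑ j, A i j ^ 2
  have hS : 0 ≤ S := by positivity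
  suffices ‖A‖ ≤ √S from (pow_le_pow_left₀ (norm_nonneg _) this 2).trans (Real.sq_sqrt hS).le
  refine ContinuousLinearMap.opNorm_le_bound _ (Real.sqrt_nonneg _) fun x => ?_
  refine le_of_sq_le_sq ?_ (by positivity)
  rw [mul_pow, Real.sq_sqrt hS, EuclideanSpace.norm_sq_eq, EuclideanSpace.norm_sq_eq,
    Finset.sum_mul]
  refine Finset.sum_le_sum fun i _ => ?_
  simpa [mulVec, dotProduct] using Finset.sum_mul_sq_le_sq_mul_sq Finset.univ (A i) x

theorem l2_opNorm_sub_le_max_of_isStarProjection {𝕜 n : Type*} [RCLike 𝕜] [Fintype n]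
    [DecidableEq n] {P Q : Matrix n n 𝕜} (hP : IsStarProjection P) (hQ : IsStarProjection Q) :
    ‖P - Q‖ ≤ max ‖P * (1 - Q)‖ ‖(1 - P) * Q‖ := by
  have h := ContinuousLinearMap.norm_sub_le_max_of_isStarProjection
    (hP.map (toEuclideanCLM (n := n) (𝕜 := 𝕜))) (hQ.map (toEuclideanCLM (n := n) (𝕜 := 𝕜)))
  rw [← map_one (toEuclideanCLM (n := n) (𝕜 := 𝕜))] at h
  simp only [← map_sub, ← map_mul] at h
  exact h

end Matrix

/-- The Moore–Penrose inverse of a matrix of full column rank. -/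
noncomputable def pseudoInv {m n : Type*} [Fintype m] [Fintype n] [DecidableEq n]
    (M : Matrix m n ℝ) : Matrix n m ℝ :=
  (Mᵀ * M)⁻¹ * Mᵀ

theorem pseudoInv_mul_self {m n : Type*} [Fintype m] [Fintype n] [DecidableEq n]
    {M : Matrix m n ℝ} (hM : IsUnit (Mᵀ * M).det) : pseudoInv M * M = 1 := by
  rw [pseudoInv, Matrix.mul_assoc, nonsing_inv_mul _ hM]

theorem transpose_pseudoInv {m n : Type*} [Fintype m] [Fintype n] [DecidableEq n]
    (M : Matrix m n ℝ) : (pseudoInv M)ᵀ = M * (Mᵀ * M)⁻¹ := by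
  rw [pseudoInv, transpose_mul, transpose_transpose, transpose_nonsing_inv, transpose_mul,
    transpose_transpose]

theorem pseudoInv_mul_transpose_pseudoInv {m n : Type*} [Fintype m] [Fintype n] [DecidableEq n]
    {M : Matrix m n ℝ} (hM : IsUnit (Mᵀ * M).det) :
    pseudoInv M * (pseudoInv M)ᵀ = (Mᵀ * M)⁻¹ := by
  rw [transpose_pseudoInv, pseudoInv, Matrix.mul_assoc, ← Matrix.mul_assoc Mᵀ,
    mul_nonsing_inv _ hM, Matrix.mul_one]

section colProj

variable {n K : ℕ} {A B : Matrix (Fin n) (Fin K) ℝ}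

variable (A) in
theorem colProj_eq_mul_pseudoInv : colProj A = A * pseudoInv A :=
  Matrix.mul_assoc _ _ _

variable (A) in
theorem transpose_colProj : (colProj A)ᵀ = colProj A := by
  rw [colProj_eq_mul_pseudoInv, transpose_mul, transpose_pseudoInv, pseudoInv, Matrix.mul_assoc]

theorem colProj_mul_self (hA : IsUnit (Aᵀ * A).det) : colProj A * A = A := by
  rw [colProj_eq_mul_pseudoInv, Matrix.mul_assoc, pseudoInv_mul_self hA, Matrix.mul_one]

theorem isStarProjection_colProj (hA : IsUnit (Aᵀ * A).det) : IsStarProjection (colProj A) where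
  isIdempotentElem := by
    rw [IsIdempotentElem, colProj_eq_mul_pseudoInv, Matrix.mul_assoc A,
      ← Matrix.mul_assoc (pseudoInv A), pseudoInv_mul_self hA, Matrix.one_mul]
  isSelfAdjoint := by
    rw [IsSelfAdjoint, star_eq_conjTranspose, conjTranspose_eq_transpose_of_trivial,
      transpose_colProj]

theorem transpose_mul_colProj (hA : IsUnit (Aᵀ * A).det) : Aᵀ * colProj A = Aᵀ := by
  rw [← transpose_colProj, ← transpose_mul, colProj_mul_self hA]

variable (A) in
theorem colProj_eq_transpose_pseudoInv_mul_transpose :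
    colProj A = (pseudoInv A)ᵀ * Aᵀ := by
  rw [← transpose_colProj, colProj_eq_mul_pseudoInv, transpose_mul]

theorem colProj_mul_one_sub_colProj (hB : IsUnit (Bᵀ * B).det) :
    colProj A * (1 - colProj B) = (pseudoInv A)ᵀ * (A - B)ᵀ * (1 - colProj B) := by
  rw [transpose_sub, Matrix.mul_sub (pseudoInv A)ᵀ, Matrix.sub_mul,
    ← colProj_eq_transpose_pseudoInv_mul_transpose, Matrix.mul_assoc _ Bᵀ, Matrix.mul_sub Bᵀ,
    transpose_mul_colProj hB, Matrix.mul_one, sub_self, Matrix.mul_zero, sub_zero]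

theorem l2_opNorm_colProj_mul_one_sub_colProj_le (hB : IsUnit (Bᵀ * B).det) :
    ‖colProj A * (1 - colProj B)‖ ≤ ‖pseudoInv A‖ * ‖A - B‖ := by
  rw [colProj_mul_one_sub_colProj hB]
  calc ‖(pseudoInv A)ᵀ * (A - B)ᵀ * (1 - colProj B)‖
      ≤ ‖(pseudoInv A)ᵀ‖ * ‖(A - B)ᵀ‖ * ‖1 - colProj B‖ := by
        grw [l2_opNorm_mul, l2_opNorm_mul]
    _ ≤ ‖pseudoInv A‖ * ‖A - B‖ := by
        rw [l2_opNorm_transpose, l2_opNorm_transpose]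
        grw [(isStarProjection_colProj hB).one_sub.norm_le, mul_one]

theorem l2_opNorm_colProj_sub_colProj_le (hA : IsUnit (Aᵀ * A).det)
    (hB : IsUnit (Bᵀ * B).det) :
    ‖colProj A - colProj B‖ ≤ max ‖pseudoInv A‖ ‖pseudoInv B‖ * ‖A - B‖ := by
  have hsymm : ‖(1 - colProj A) * colProj B‖ = ‖colProj B * (1 - colProj A)‖ := by
    rw [← l2_opNorm_transpose, transpose_mul, transpose_sub, transpose_one, transpose_colProj,
      transpose_colProj]
  grw [l2_opNorm_sub_le_max_of_isStarProjection (isStarProjection_colProj hA)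
    (isStarProjection_colProj hB), hsymm, l2_opNorm_colProj_mul_one_sub_colProj_le hB,
    l2_opNorm_colProj_mul_one_sub_colProj_le hA, norm_sub_rev B A,
    max_mul_of_nonneg _ _ (norm_nonneg _)]

end colProj

section dummyMatrix

variable {n K : ℕ}

theorem dummyMatrix_transpose_mul_self (z : Fin n → Fin K) :
    (dummyMatrix z)ᵀ * dummyMatrix z = diagonal fun v => (labelCount z v : ℝ) := by
  ext v w
  by_cases h : v = w
  · subst h
    simp +contextual [mul_apply, dummyMatrix, labelCount, Finset.sum_boole]
  · simp +contextual [mul_apply, dummyMatrix, diagonal_apply_ne _ h, Ne.symm h]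

theorem sum_sq_dummyMatrix_sub (z zh : Fin n → Fin K) :
    ∑ k, ∑ j, (dummyMatrix z - dummyMatrix zh) k j ^ 2 =
      2 * ((Finset.univ.filter (fun k => zh k ≠ z k)).card : ℝ) := by
  rw [Finset.card_filter, Nat.cast_sum, Finset.mul_sum]
  refine Finset.sum_congr rfl fun k _ => ?_
  by_cases h : zh k = z k
  · simp [dummyMatrix, h]
  · rw [Fintype.sum_eq_add (z k) (zh k) (Ne.symm h)]
    · norm_num [dummyMatrix, h, Ne.symm h]
    · intro j hj
      simp [dummyMatrix, Ne.symm hj.1, Ne.symm hj.2]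

theorem isUnit_det_dummyMatrix_transpose_mul_self {z : Fin n → Fin K}
    (hz : ∀ v, labelCount z v ≠ 0) : IsUnit ((dummyMatrix z)ᵀ * dummyMatrix z).det := by
  rw [dummyMatrix_transpose_mul_self, det_diagonal, isUnit_iff_ne_zero]
  exact Finset.prod_ne_zero_iff.mpr fun v _ => Nat.cast_ne_zero.mpr (hz v)

theorem l2_opNorm_pseudoInv_dummyMatrix_le {z : Fin n → Fin K} {m : ℕ} (hm : 0 < m)
    (hz : ∀ v, m ≤ labelCount z v) : ‖pseudoInv (dummyMatrix z)‖ ≤ (√m)⁻¹ := by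
  have hpos : ∀ v, (0 : ℝ) < labelCount z v := fun v => by exact_mod_cast hm.trans_le (hz v)
  have hinv : (diagonal fun v => (labelCount z v : ℝ))⁻¹ =
      diagonal fun v => (labelCount z v : ℝ)⁻¹ :=
    inv_eq_left_inv (by simp [diagonal_mul_diagonal, inv_mul_cancel₀ (hpos _).ne'])
  rw [← Real.sqrt_inv]
  refine Real.le_sqrt_of_sq_le ?_
  rw [sq, ← l2_opNorm_mul_transpose_self, pseudoInv_mul_transpose_pseudoInv
    (isUnit_det_dummyMatrix_transpose_mul_self fun v => Nat.cast_ne_zero.mp (hpos v).ne'),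
    dummyMatrix_transpose_mul_self, hinv, l2_opNorm_diagonal]
  refine (pi_norm_le_iff_of_nonneg (by positivity)).mpr fun v => ?_
  rw [Real.norm_eq_abs, abs_inv, abs_of_pos (hpos v)]
  exact inv_anti₀ (by exact_mod_cast hm) (by exact_mod_cast hz v)

theorem sq_l2_opNorm_colProj_dummyMatrix_sub_le {z zh : Fin n → Fin K} {m : ℕ} (hm : 0 < m)
    (hz : ∀ v, m ≤ labelCount z v) (hzh : ∀ v, m ≤ labelCount zh v) :
    ‖colProj (dummyMatrix z) - colProj (dummyMatrix zh)‖ ^ 2 ≤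
      2 * ((Finset.univ.filter (fun k => zh k ≠ z k)).card : ℝ) / m := by
  have hunit {w : Fin n → Fin K} (hw : ∀ v, m ≤ labelCount w v) :
      IsUnit ((dummyMatrix w)ᵀ * dummyMatrix w).det :=
    isUnit_det_dummyMatrix_transpose_mul_self fun v => (hm.trans_le (hw v)).ne'
  calc ‖colProj (dummyMatrix z) - colProj (dummyMatrix zh)‖ ^ 2
      ≤ ((√m)⁻¹ * ‖dummyMatrix z - dummyMatrix zh‖) ^ 2 := by
        grw [l2_opNorm_colProj_sub_colProj_le (hunit hz) (hunit hzh),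
          max_le (l2_opNorm_pseudoInv_dummyMatrix_le hm hz)
            (l2_opNorm_pseudoInv_dummyMatrix_le hm hzh)]
    _ = ‖dummyMatrix z - dummyMatrix zh‖ ^ 2 / m := by
        rw [mul_pow, inv_pow, Real.sq_sqrt (Nat.cast_nonneg m), inv_mul_eq_div]
    _ ≤ _ := by
        grw [l2_opNorm_sq_le_sum_sq, sum_sq_dummyMatrix_sub]

end dummyMatrix

theorem projection_difference_bound {n K : ℕ} (z zh : Fin n → Fin K)
    (nmin : ℕ)
    (hnmin : nmin = sInf (Set.range fun v => min (labelCount z v) (labelCount zh v)))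
    (α δ : ℝ)
    (hα : α = (nmin : ℝ) / n)
    (hδ : δ = ((Finset.univ.filter (fun k => zh k ≠ z k)).card : ℝ) / n)
    (hαpos : 0 < α) :
    l2OpNorm (colProj (dummyMatrix z) - colProj (dummyMatrix zh)) ≤
      Real.sqrt (2 * δ / α) := by
  obtain ⟨hmin, hn⟩ : 0 < (nmin : ℝ) ∧ 0 < (n : ℝ) := by
    rw [hα, div_pos_iff] at hαpos
    exact hαpos.resolve_right fun h => h.1.not_ge (Nat.cast_nonneg _)
  have hcount : ∀ v, nmin ≤ labelCount z v ∧ nmin ≤ labelCount zh v := fun v =>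
    le_min_iff.mp (hnmin ▸ Nat.sInf_le ⟨v, rfl⟩)
  have hratio : 2 * δ / α =
      2 * ((Finset.univ.filter (fun k => zh k ≠ z k)).card : ℝ) / nmin := by
    rw [hα, hδ]; field_simp
  rw [l2OpNorm_eq_norm, hratio]
  exact Real.le_sqrt_of_sq_le <| sq_l2_opNorm_colProj_dummyMatrix_sub_le
    (by exact_mod_cast hmin) (fun v => (hcount v).1) fun v => (hcount v).2
end

section
/- Let x, y ∈ ℝⁿ, and let P and Q be two orthogonal projection matrices on ℝⁿ. Define β̂ = ⟨x, (I−P)y⟩ / ‖(I−P)x‖₂² and β̂' = ⟨x, (I−Q)y⟩ / ‖(I−Q)x‖₂², assuming both denominators are positive. Let ρ = min{‖(I−P)x‖₂², ‖(I−Q)x‖₂²}/‖x‖₂² (so 0 < ρ ≤ 1). Then |β̂' − β̂| ≤ (2/ρ²)·‖P − Q‖₂·‖y‖₂/‖x‖₂. -/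
open Matrix

/-!
Write `p = I - P`, `q = I - Q` (again orthogonal projections, with `p - q = Q - P`),
`a_p = ⟪x, p y⟫` and `d_p = ‖p x‖² = ⟪x, p x⟫`. Then
`a_q / d_q - a_p / d_p = ((a_q - a_p) d_p + a_p (d_p - d_q)) / (d_q d_p)`.
Both differences are inner products against `Q - P`, so they are at most `‖P - Q‖ ‖x‖ ‖y‖` and
`‖P - Q‖ ‖x‖²`; projections are contractions, so `d_p ≤ ‖x‖²` and `|a_p| ≤ ‖x‖ ‖y‖`; and the
denominator is at least `(ρ ‖x‖²)²`.
-/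

open scoped InnerProductSpace

theorem abs_div_sub_div_le {a a' d d' ε δ A D : ℝ} (hd : 0 < d) (hd' : 0 < d')
    (ha : |a' - a| ≤ ε) (hdD : d ≤ D) (hA : |a| ≤ A) (hδ : |d - d'| ≤ δ) :
    |a' / d' - a / d| ≤ (ε * D + A * δ) / (d' * d) := by
  rw [div_sub_div _ _ hd'.ne' hd.ne', abs_div, abs_of_pos (mul_pos hd' hd)]
  gcongr
  calc |a' * d - d' * a| = |(a' - a) * d + a * (d - d')| := by ring_nf
    _ ≤ |a' - a| * d + |a| * |d - d'| := by
        grw [abs_add_le, abs_mul, abs_mul, abs_of_pos hd]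
    _ ≤ ε * D + A * δ := by
        gcongr
        · exact (abs_nonneg _).trans ha
        · exact (abs_nonneg _).trans hA

section

variable {E : Type*} [NormedAddCommGroup E] [InnerProductSpace ℝ E]

theorem abs_inner_apply_le (T : E →L[ℝ] E) (x y : E) : |⟪x, T y⟫_ℝ| ≤ ‖T‖ * ‖x‖ * ‖y‖ := by
  calc |⟪x, T y⟫_ℝ| ≤ ‖x‖ * ‖T y‖ := abs_real_inner_le_norm _ _
    _ ≤ ‖x‖ * (‖T‖ * ‖y‖) := by gcongr; exact T.le_opNorm y
    _ = _ := by ring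

/-- The OLS coefficient `β̂`, for the residual projection `p = I - P`. -/
noncomputable def olsCoeff (p : E →L[ℝ] E) (x y : E) : ℝ := ⟪x, p y⟫_ℝ / ‖p x‖ ^ 2

variable [CompleteSpace E]

namespace IsStarProjection

variable {p : E →L[ℝ] E}

theorem inner_apply_self (hp : IsStarProjection p) (x : E) : ⟪x, p x⟫_ℝ = ‖p x‖ ^ 2 := by
  calc ⟪x, p x⟫_ℝ = ⟪x, (p * p) x⟫_ℝ := by rw [hp.isIdempotentElem.eq]
    _ = ⟪p.adjoint x, p x⟫_ℝ := (p.adjoint_inner_left (p x) x).symm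
    _ = ⟪p x, p x⟫_ℝ := by rw [hp.isSelfAdjoint.adjoint_eq]
    _ = ‖p x‖ ^ 2 := real_inner_self_eq_norm_sq _

theorem norm_apply_le (hp : IsStarProjection p) (x : E) : ‖p x‖ ≤ ‖x‖ :=
  (p.le_opNorm x).trans (mul_le_of_le_one_left (norm_nonneg x) hp.norm_le)

end IsStarProjection

theorem abs_olsCoeff_sub_le_div {p q : E →L[ℝ] E} (hp : IsStarProjection p)
    (hq : IsStarProjection q) {x : E} (hpx : 0 < ‖p x‖) (hqx : 0 < ‖q x‖) (y : E) :
    |olsCoeff q x y - olsCoeff p x y| ≤ 2 * ‖p - q‖ * ‖x‖ ^ 3 * ‖y‖ / (‖q x‖ ^ 2 * ‖p x‖ ^ 2) := by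
  have hnum : |⟪x, q y⟫_ℝ - ⟪x, p y⟫_ℝ| ≤ ‖p - q‖ * ‖x‖ * ‖y‖ := by
    rw [← inner_sub_right, ← _root_.sub_apply, norm_sub_rev]
    exact abs_inner_apply_le _ _ _
  have hden : |‖p x‖ ^ 2 - ‖q x‖ ^ 2| ≤ ‖p - q‖ * ‖x‖ * ‖x‖ := by
    rw [← hp.inner_apply_self, ← hq.inner_apply_self, ← inner_sub_right,
      ← _root_.sub_apply]
    exact abs_inner_apply_le _ _ _
  have hap : |⟪x, p y⟫_ℝ| ≤ ‖x‖ * ‖y‖ :=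
    (abs_real_inner_le_norm _ _).trans (by gcongr; exact hp.norm_apply_le y)
  have hdp : ‖p x‖ ^ 2 ≤ ‖x‖ ^ 2 := by gcongr; exact hp.norm_apply_le x
  unfold olsCoeff
  convert abs_div_sub_div_le (by positivity) (by positivity) hnum hdp hap hden using 2
  ring

theorem abs_olsCoeff_sub_le {p q : E →L[ℝ] E} (hp : IsStarProjection p) (hq : IsStarProjection q)
    {x : E} (hpx : 0 < ‖p x‖) (hqx : 0 < ‖q x‖) (y : E) {ρ : ℝ}
    (hρ : ρ = min (‖p x‖ ^ 2) (‖q x‖ ^ 2) / ‖x‖ ^ 2) :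
    |olsCoeff q x y - olsCoeff p x y| ≤ 2 / ρ ^ 2 * ‖p - q‖ * ‖y‖ / ‖x‖ := by
  have hx : 0 < ‖x‖ := hpx.trans_le (hp.norm_apply_le x)
  have hρ_pos : 0 < ρ := hρ ▸ by positivity
  have hρp : ρ * ‖x‖ ^ 2 ≤ ‖p x‖ ^ 2 := by
    rw [hρ, div_mul_cancel₀ _ (by positivity)]; exact min_le_left _ _
  have hρq : ρ * ‖x‖ ^ 2 ≤ ‖q x‖ ^ 2 := by
    rw [hρ, div_mul_cancel₀ _ (by positivity)]; exact min_le_right _ _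
  calc |olsCoeff q x y - olsCoeff p x y|
      ≤ 2 * ‖p - q‖ * ‖x‖ ^ 3 * ‖y‖ / (‖q x‖ ^ 2 * ‖p x‖ ^ 2) :=
        abs_olsCoeff_sub_le_div hp hq hpx hqx y
    _ ≤ 2 * ‖p - q‖ * ‖x‖ ^ 3 * ‖y‖ / ((ρ * ‖x‖ ^ 2) * (ρ * ‖x‖ ^ 2)) := by gcongr
    _ = 2 / ρ ^ 2 * ‖p - q‖ * ‖y‖ / ‖x‖ := by field_simp

end

namespace Matrix

variable {ι : Type*} [Fintype ι]

theorem isStarProjection_of_mul_self_of_transpose {P : Matrix ι ι ℝ} (hidem : P * P = P)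
    (hsymm : Pᵀ = P) : IsStarProjection P :=
  ⟨hidem, by rw [IsSelfAdjoint, star_eq_conjTranspose, conjTranspose_eq_transpose_of_trivial, hsymm]⟩

theorem dotProduct_self_eq_norm_toLp_sq (v : ι → ℝ) : v ⬝ᵥ v = ‖WithLp.toLp 2 v‖ ^ 2 := by
  rw [← real_inner_self_eq_norm_sq, EuclideanSpace.inner_toLp_toLp]
  simp

theorem olsCoeff_toEuclideanCLM [DecidableEq ι] (A : Matrix ι ι ℝ) (x y : ι → ℝ) :
    olsCoeff (toEuclideanCLM (𝕜 := ℝ) A) (WithLp.toLp 2 x) (WithLp.toLp 2 y) =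
      x ⬝ᵥ A *ᵥ y / ((A *ᵥ x) ⬝ᵥ (A *ᵥ x)) := by
  rw [olsCoeff, inner_toEuclideanCLM, toEuclideanCLM_toLp, dotProduct_self_eq_norm_toLp_sq]

end Matrix

theorem l2OpNorm_eq_norm_toEuclideanCLM {n : ℕ} (A : Matrix (Fin n) (Fin n) ℝ) :
    l2OpNorm A = ‖Matrix.toEuclideanCLM (𝕜 := ℝ) A‖ := rfl

theorem ols_projection_perturbation {n : ℕ} (x y : Fin n → ℝ)
    (P Q : Matrix (Fin n) (Fin n) ℝ)
    (hP_idem : P * P = P) (hP_symm : Pᵀ = P)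
    (hQ_idem : Q * Q = Q) (hQ_symm : Qᵀ = Q)
    (hxP : 0 < ((1 - P).mulVec x) ⬝ᵥ ((1 - P).mulVec x))
    (hxQ : 0 < ((1 - Q).mulVec x) ⬝ᵥ ((1 - Q).mulVec x))
    (ρ : ℝ)
    (hρ : ρ = min (((1 - P).mulVec x) ⬝ᵥ ((1 - P).mulVec x))
        (((1 - Q).mulVec x) ⬝ᵥ ((1 - Q).mulVec x)) / (x ⬝ᵥ x)) :
    |(x ⬝ᵥ ((1 - Q).mulVec y)) / (((1 - Q).mulVec x) ⬝ᵥ ((1 - Q).mulVec x)) -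
        (x ⬝ᵥ ((1 - P).mulVec y)) / (((1 - P).mulVec x) ⬝ᵥ ((1 - P).mulVec x))| ≤
      (2 / ρ ^ 2) * l2OpNorm (P - Q) * Real.sqrt (y ⬝ᵥ y) / Real.sqrt (x ⬝ᵥ x) := by
  have hp : IsStarProjection (toEuclideanCLM (𝕜 := ℝ) (1 - P)) :=
    (isStarProjection_of_mul_self_of_transpose hP_idem hP_symm).one_sub.map _
  have hq : IsStarProjection (toEuclideanCLM (𝕜 := ℝ) (1 - Q)) :=
    (isStarProjection_of_mul_self_of_transpose hQ_idem hQ_symm).one_sub.map _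
  have hpq : ‖toEuclideanCLM (𝕜 := ℝ) (1 - P) - toEuclideanCLM (𝕜 := ℝ) (1 - Q)‖ =
      l2OpNorm (P - Q) := by
    rw [l2OpNorm_eq_norm_toEuclideanCLM, ← map_sub, sub_sub_sub_cancel_left, map_sub,
      norm_sub_rev, map_sub]
  simp only [dotProduct_self_eq_norm_toLp_sq, ← toEuclideanCLM_toLp,
    sq_pos_iff, norm_ne_zero_iff] at hxP hxQ hρ
  rw [← olsCoeff_toEuclideanCLM, ← olsCoeff_toEuclideanCLM, ← hpq,
    dotProduct_self_eq_norm_toLp_sq, dotProduct_self_eq_norm_toLp_sq,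
    Real.sqrt_sq (norm_nonneg _), Real.sqrt_sq (norm_nonneg _)]
  exact abs_olsCoeff_sub_le hp hq (norm_pos_iff.mpr hxP) (norm_pos_iff.mpr hxQ) _ hρ
end

section
/- Let X₁, X₂, ... be real random variables that, conditionally on an event (Z = z), are independent with means μ_i(z) and variances σ_i²(z) ≤ σ_max². Fix vectors μ̌(z), μ̌(v) ∈ ℝᵖ and suppose the relative errors R_{z,v} = ‖μ(z) − μ̌(z)‖₂/‖μ(z) − μ(v)‖₂ and R_{v,z} are both at most 1/10. Then the conditional probability that ‖X_{1:p} − μ̌(v)‖₂ < ‖X_{1:p} − μ̌(z)‖₂ given Z = z is at most 25·σ_max²/‖μ(z) − μ(v)‖₂². -/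
/-!
If `x` is closer to the estimate `v` of the wrong centre than to the estimate `u` of its own
centre `a`, expanding the squares gives `2⟪x - a, u - v⟫ < ‖a - u‖² - ‖a - v‖² ≤ -(4/5)‖a - b‖²`,
because both estimates lie within a tenth of the separation `‖a - b‖`. The inner product is a
weighted sum of the centred, independent coordinates, with variance at most
`‖u - v‖² σ² ≤ (36/25)‖a - b‖² σ²`, so Chebyshev's inequality bounds the probability.
-/

open MeasureTheory ProbabilityTheory
open scoped RealInnerProductSpace
open WithLp (toLp)

section NearestCenter

variable {F : Type*} [NormedAddCommGroup F] [InnerProductSpace ℝ F]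

lemma norm_sub_sq_sub_norm_sub_sq (x a u v : F) :
    ‖x - v‖ ^ 2 - ‖x - u‖ ^ 2 = 2 * ⟪x - a, u - v⟫ + ‖a - v‖ ^ 2 - ‖a - u‖ ^ 2 := by
  rw [show x - v = (x - a) + (a - v) by abel, show x - u = (x - a) + (a - u) by abel,
    show u - v = (a - v) - (a - u) by abel, norm_add_sq_real, norm_add_sq_real,
    inner_sub_right (x - a) (a - v) (a - u)]
  ring

lemma inner_lt_of_norm_sub_lt_norm_sub {x a b u v : F} (hu : ‖a - u‖ ≤ 1 / 10 * ‖a - b‖)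
    (hv : ‖b - v‖ ≤ 1 / 10 * ‖a - b‖) (h : ‖x - v‖ < ‖x - u‖) :
    ⟪x - a, u - v⟫ < -(2 / 5) * ‖a - b‖ ^ 2 := by
  have hsq := pow_lt_pow_left₀ h (norm_nonneg _) two_ne_zero
  have hav : ‖a - b‖ ≤ ‖a - v‖ + ‖b - v‖ := by
    simpa only [norm_sub_rev v b] using norm_sub_le_norm_sub_add_norm_sub a v b
  have hexpand := norm_sub_sq_sub_norm_sub_sq x a u v
  nlinarith [norm_nonneg (a - u), norm_nonneg (b - v)]

end NearestCenter

lemma norm_sub_le_of_norm_sub_le_tenth {E : Type*} [SeminormedAddCommGroup E] {a b u v : E}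
    (hu : ‖a - u‖ ≤ 1 / 10 * ‖a - b‖) (hv : ‖b - v‖ ≤ 1 / 10 * ‖a - b‖) :
    ‖u - v‖ ≤ 6 / 5 * ‖a - b‖ := by
  have h := norm_add₃_le (a := -(a - u)) (b := a - b) (c := b - v)
  rw [norm_neg, show -(a - u) + (a - b) + (b - v) = u - v by abel] at h
  linarith

section WeightedSum

variable {Ω ι : Type*} [MeasurableSpace Ω] {ν : Measure Ω} [IsProbabilityMeasure ν] [Fintype ι]
  {X : ι → Ω → ℝ} {σ : ℝ}

lemma variance_sum_mul_sub_le (hindep : Pairwise fun i j => X i ⟂ᵢ[ν] X j)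
    (hL2 : ∀ i, MemLp (X i) 2 ν) (hvar : ∀ i, variance (X i) ν ≤ σ ^ 2) (c m : ι → ℝ) :
    variance (fun ω => ∑ i, c i * (X i ω - m i)) ν ≤ (∑ i, c i ^ 2) * σ ^ 2 := by
  set Y : ι → Ω → ℝ := fun i ω => c i * (X i ω - m i)
  have hY : ∀ i ∈ Finset.univ, MemLp (Y i) 2 ν := fun i _ =>
    ((hL2 i).sub (memLp_const (m i))).const_mul (c i)
  have hYindep : Set.Pairwise ↑(Finset.univ : Finset ι) fun i j => Y i ⟂ᵢ[ν] Y j :=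
    fun i _ j _ hij => (hindep hij).comp ((measurable_id.sub_const (m i)).const_mul (c i))
      ((measurable_id.sub_const (m j)).const_mul (c j))
  calc variance (fun ω => ∑ i, Y i ω) ν = ∑ i, c i ^ 2 * variance (X i) ν := by
        rw [← Finset.sum_fn, IndepFun.variance_sum hY hYindep]
        simp only [Y, variance_const_mul, variance_sub_const (hL2 _).1]
    _ ≤ ∑ i, c i ^ 2 * σ ^ 2 := by
        gcongr with i
        exact hvar i
    _ = (∑ i, c i ^ 2) * σ ^ 2 := (Finset.sum_mul ..).symm

lemma meas_le_abs_sum_mul_sub_le (hindep : Pairwise fun i j => X i ⟂ᵢ[ν] X j)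
    (hL2 : ∀ i, MemLp (X i) 2 ν) {m : ι → ℝ} (hmean : ∀ i, ν[X i] = m i)
    (hvar : ∀ i, variance (X i) ν ≤ σ ^ 2) (c : ι → ℝ) {t : ℝ} (ht : 0 < t) :
    ν {ω | t ≤ |∑ i, c i * (X i ω - m i)|} ≤ ENNReal.ofReal ((∑ i, c i ^ 2) * σ ^ 2 / t ^ 2) := by
  have hY : ∀ i ∈ Finset.univ, MemLp (fun ω => c i * (X i ω - m i)) 2 ν := fun i _ =>
    ((hL2 i).sub (memLp_const (m i))).const_mul (c i)
  have hcentered : ν[fun ω => ∑ i, c i * (X i ω - m i)] = 0 := by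
    rw [integral_finsetSum _ fun i hi => (hY i hi).integrable one_le_two]
    refine Finset.sum_eq_zero fun i _ => ?_
    rw [integral_const_mul, integral_sub ((hL2 i).integrable one_le_two) (integrable_const _),
      hmean i, integral_const]
    simp
  calc ν {ω | t ≤ |∑ i, c i * (X i ω - m i)|}
      ≤ ENNReal.ofReal (variance (fun ω => ∑ i, c i * (X i ω - m i)) ν / t ^ 2) := by
        simpa only [hcentered, sub_zero] using
          meas_ge_le_variance_div_sq (memLp_finsetSum _ hY) ht
    _ ≤ _ := by
        gcongr
        exact variance_sum_mul_sub_le hindep hL2 hvar c m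

end WeightedSum

lemma EuclideanSpace.norm_toLp_sub_toLp_sq {ι : Type*} [Fintype ι] (f g : ι → ℝ) :
    ‖toLp 2 f - toLp 2 g‖ ^ 2 = ∑ i, (f i - g i) ^ 2 := by
  simp [← WithLp.toLp_sub, EuclideanSpace.norm_sq_eq]

lemma EuclideanSpace.norm_toLp_sub_toLp {ι : Type*} [Fintype ι] (f g : ι → ℝ) :
    ‖toLp 2 f - toLp 2 g‖ = √(∑ i, (f i - g i) ^ 2) := by
  rw [← norm_toLp_sub_toLp_sq, Real.sqrt_sq (norm_nonneg _)]

lemma EuclideanSpace.inner_toLp_sub_toLp {ι : Type*} [Fintype ι] (f g h k : ι → ℝ) :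
    ⟪toLp 2 f - toLp 2 g, toLp 2 h - toLp 2 k⟫ = ∑ i, (h i - k i) * (f i - g i) := by
  simp [← WithLp.toLp_sub, EuclideanSpace.inner_toLp_toLp, dotProduct]

theorem chebyshev_mislabeling_bound_general {Ω E : Type*} [MeasurableSpace Ω]
    (μ : Measure Ω) [IsProbabilityMeasure μ]
    (Z : Ω → E) (z : E) (hz : μ (Z ⁻¹' {z}) ≠ 0)
    (p : ℕ) (X : Fin p → Ω → ℝ)
    (mz mv mcz mcv : Fin p → ℝ) (σmax : ℝ)
    (hindep : iIndepFun X (μ[|Z ⁻¹' {z}]))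
    (hL2 : ∀ i, MemLp (X i) 2 (μ[|Z ⁻¹' {z}]))
    (hmean : ∀ i, ∫ ω, X i ω ∂(μ[|Z ⁻¹' {z}]) = mz i)
    (hvar : ∀ i, variance (X i) (μ[|Z ⁻¹' {z}]) ≤ σmax ^ 2)
    (hsep : 0 < ∑ i, (mz i - mv i) ^ 2)
    (hRz : Real.sqrt (∑ i, (mz i - mcz i) ^ 2) ≤
      (1 / 10) * Real.sqrt (∑ i, (mz i - mv i) ^ 2))
    (hRv : Real.sqrt (∑ i, (mv i - mcv i) ^ 2) ≤
      (1 / 10) * Real.sqrt (∑ i, (mz i - mv i) ^ 2)) :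
    ((μ[|Z ⁻¹' {z}]) {ω | Real.sqrt (∑ i, (X i ω - mcv i) ^ 2) <
        Real.sqrt (∑ i, (X i ω - mcz i) ^ 2)}).toReal ≤
      25 * σmax ^ 2 / (∑ i, (mz i - mv i) ^ 2) := by
  have := cond_isProbabilityMeasure (s := Z ⁻¹' {z}) hz
  simp only [← EuclideanSpace.norm_toLp_sub_toLp] at hRz hRv ⊢
  rw [← EuclideanSpace.norm_toLp_sub_toLp_sq] at hsep ⊢
  set δ := ‖toLp 2 mz - toLp 2 mv‖
  have hevent : {ω | ‖toLp 2 (X · ω) - toLp 2 mcv‖ < ‖toLp 2 (X · ω) - toLp 2 mcz‖} ⊆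
      {ω | 2 / 5 * δ ^ 2 ≤ |∑ i, (mcz i - mcv i) * (X i ω - mz i)|} :=
      Set.ofPred_subset_ofPred.2 fun ω hω => by
    have h : _ < -(2 / 5) * δ ^ 2 := inner_lt_of_norm_sub_lt_norm_sub hRz hRv hω
    rw [EuclideanSpace.inner_toLp_sub_toLp] at h
    refine le_abs.2 (Or.inr ?_)
    linarith
  have hc : ∑ i, (mcz i - mcv i) ^ 2 ≤ (6 / 5 * δ) ^ 2 := by
    rw [← EuclideanSpace.norm_toLp_sub_toLp_sq]
    gcongr
    exact norm_sub_le_of_norm_sub_le_tenth hRz hRv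
  have hcheb := meas_le_abs_sum_mul_sub_le (fun _ _ hij => hindep.indepFun hij) hL2 hmean hvar
    (mcz - mcv) (t := 2 / 5 * δ ^ 2) (by positivity)
  refine ENNReal.toReal_le_of_le_ofReal (by positivity)
    ((measure_mono hevent).trans (hcheb.trans (ENNReal.ofReal_le_ofReal ?_)))
  have hδ : δ ≠ 0 := (pow_ne_zero_iff two_ne_zero).1 hsep.ne'
  calc (∑ i, (mcz i - mcv i) ^ 2) * σmax ^ 2 / (2 / 5 * δ ^ 2) ^ 2
      ≤ (6 / 5 * δ) ^ 2 * σmax ^ 2 / (2 / 5 * δ ^ 2) ^ 2 := by gcongr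
    _ = 9 * σmax ^ 2 / δ ^ 2 := by field_simp; ring
    _ ≤ 25 * σmax ^ 2 / δ ^ 2 := by gcongr; norm_num

theorem chebyshev_mislabeling_bound {Ω E : Type*} [MeasurableSpace Ω]
    [MeasurableSpace E] [MeasurableSingletonClass E]
    (μ : Measure Ω) [IsProbabilityMeasure μ]
    (Z : Ω → E) (hZ : Measurable Z) (z : E) (hz : μ (Z ⁻¹' {z}) ≠ 0)
    (p : ℕ) (X : Fin p → Ω → ℝ) (hX : ∀ i, Measurable (X i))
    (mz mv mcz mcv : Fin p → ℝ) (σmax : ℝ)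
    (hindep : iIndepFun X (μ[|Z ⁻¹' {z}]))
    (hL2 : ∀ i, MemLp (X i) 2 (μ[|Z ⁻¹' {z}]))
    (hmean : ∀ i, ∫ ω, X i ω ∂(μ[|Z ⁻¹' {z}]) = mz i)
    (hvar : ∀ i, variance (X i) (μ[|Z ⁻¹' {z}]) ≤ σmax ^ 2)
    (hsep : 0 < ∑ i, (mz i - mv i) ^ 2)
    (hRz : Real.sqrt (∑ i, (mz i - mcz i) ^ 2) ≤
      (1 / 10) * Real.sqrt (∑ i, (mz i - mv i) ^ 2))
    (hRv : Real.sqrt (∑ i, (mv i - mcv i) ^ 2) ≤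
      (1 / 10) * Real.sqrt (∑ i, (mz i - mv i) ^ 2)) :
    ((μ[|Z ⁻¹' {z}]) {ω | Real.sqrt (∑ i, (X i ω - mcv i) ^ 2) <
        Real.sqrt (∑ i, (X i ω - mcz i) ^ 2)}).toReal ≤
      25 * σmax ^ 2 / (∑ i, (mz i - mv i) ^ 2) :=
  chebyshev_mislabeling_bound_general μ Z z hz p X mz mv mcz mcv σmax hindep hL2 hmean hvar hsep hRz
    hRv
end

section
/- (Proposition 3.2 / recovery) Let Z take values in a finite set E with P(Z = z) > 0, and conditionally on Z, let X₁, X₂, ... be independent with conditional means μ_i(z), conditional variances bounded by σ_max², and with separation Σ_{i=1}^∞ (μ_i(z) − μ_i(v))² = ∞ for all z ≠ v. Then there exists a random variable Z' that is measurable with respect to σ(X₂, X₃, ...) (i.e., excluding X₁) such that Z' = Z almost surely. -/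
/-!
Classify by the nearest mean over the coordinates `1, …, p`. Given `Z = z`, preferring a label
`v ≠ z` forces the centred sum `∑ (m i z - m i v) (X i - m i z)` to deviate by half of
`D = ∑ (m i z - m i v) ^ 2`, which by Chebyshev has probability at most `4 σ² / D → 0`.
Hence the classifiers converge to `Z` in probability; along a subsequence with summable error
probabilities they converge almost surely (Borel–Cantelli), and their pointwise limit is
measurable for the σ-algebra generated by the `X i`, `i ≠ 0`.
-/

open MeasureTheory ProbabilityTheory Filter Topology

section LeastArgmin

variable {ι : Type*} [Fintype ι] [LinearOrder ι] [Nonempty ι]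

omit [LinearOrder ι] in
theorem Finset.filter_forall_le_nonempty (f : ι → ℝ) :
    (Finset.univ.filter fun z => ∀ v, f z ≤ f v).Nonempty := by
  obtain ⟨z, -, hz⟩ := Finset.exists_min_image Finset.univ f Finset.univ_nonempty
  exact ⟨z, by simpa using fun v => hz v (Finset.mem_univ v)⟩

noncomputable def leastArgmin (f : ι → ℝ) : ι :=
  (Finset.univ.filter fun z => ∀ v, f z ≤ f v).min' (Finset.filter_forall_le_nonempty f)

theorem leastArgmin_eq_iff (f : ι → ℝ) (z : ι) :
    leastArgmin f = z ↔ (∀ v, f z ≤ f v) ∧ ∀ w, (∀ v, f w ≤ f v) → z ≤ w := by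
  simp [leastArgmin, Finset.min'_eq_iff]

theorem leastArgmin_le (f : ι → ℝ) (v : ι) : f (leastArgmin f) ≤ f v :=
  ((leastArgmin_eq_iff f _).1 rfl).1 v

theorem measurable_leastArgmin [MeasurableSpace ι] :
    Measurable (leastArgmin : (ι → ℝ) → ι) := by
  refine measurable_to_countable' fun z => ?_
  have hle : ∀ u v : ι, Measurable fun f : ι → ℝ => f u ≤ f v := fun u v =>
    measurableSet_setOfPred.1 (measurableSet_le (measurable_pi_apply u) (measurable_pi_apply v))
  simp only [Set.preimage, Set.mem_singleton_iff, leastArgmin_eq_iff]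
  exact measurableSet_setOfPred.2 <| (Measurable.forall fun v => hle z v).and <|
    Measurable.forall fun w => (Measurable.forall fun v => hle w v).imp measurable_const

noncomputable def nearestMeanLabel (m : ℕ → ι → ℝ) (p : ℕ) (x : ℕ → ℝ) : ι :=
  leastArgmin fun u => ∑ i ∈ Finset.range p, (x i - m i u) ^ 2

theorem measurable_nearestMeanLabel [MeasurableSpace ι] (m : ℕ → ι → ℝ) (p : ℕ) :
    Measurable (nearestMeanLabel m p) :=
  measurable_leastArgmin.comp <| measurable_pi_lambda _ fun _ =>
    Finset.measurable_sum _ fun i _ => ((measurable_pi_apply i).sub_const _).pow_const 2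

theorem sum_sq_sub_nearestMeanLabel_le (m : ℕ → ι → ℝ) (p : ℕ) (x : ℕ → ℝ) (v : ι) :
    ∑ i ∈ Finset.range p, (x i - m i (nearestMeanLabel m p x)) ^ 2 ≤
      ∑ i ∈ Finset.range p, (x i - m i v) ^ 2 :=
  leastArgmin_le (fun u => ∑ i ∈ Finset.range p, (x i - m i u) ^ 2) v

end LeastArgmin

section Chebyshev

variable {Ω ι : Type*} [MeasurableSpace Ω] {ν : Measure Ω} {X : ι → Ω → ℝ} {s : Finset ι}

theorem variance_sum_mul_le (hindep : (s : Set ι).Pairwise fun i j => IndepFun (X i) (X j) ν)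
    (hL2 : ∀ i ∈ s, MemLp (X i) 2 ν) (c : ι → ℝ) {σ2 : ℝ}
    (hvar : ∀ i ∈ s, variance (X i) ν ≤ σ2) :
    variance (fun ω => ∑ i ∈ s, c i * X i ω) ν ≤ σ2 * ∑ i ∈ s, c i ^ 2 := by
  have hsum : (fun ω => ∑ i ∈ s, c i * X i ω) = ∑ i ∈ s, c i • X i := by
    ext ω; simp
  rw [hsum, IndepFun.variance_sum (fun i hi => (hL2 i hi).const_smul (c i))
    (hindep.mono' fun i j h => h.comp (measurable_const_mul (c i)) (measurable_const_mul (c j))),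
    Finset.mul_sum]
  refine Finset.sum_le_sum fun i hi => ?_
  rw [variance_smul, mul_comm]
  exact mul_le_mul_of_nonneg_right (hvar i hi) (sq_nonneg _)

theorem integral_sum_mul (hL2 : ∀ i ∈ s, MemLp (X i) 2 ν) [IsFiniteMeasure ν] (c a : ι → ℝ)
    (hmean : ∀ i ∈ s, ν[X i] = a i) :
    ∫ ω, ∑ i ∈ s, c i * X i ω ∂ν = ∑ i ∈ s, c i * a i := by
  rw [integral_finsetSum _ fun i hi => ((hL2 i hi).integrable one_le_two).const_mul _]
  exact Finset.sum_congr rfl fun i hi => by rw [integral_const_mul, hmean i hi]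

theorem Finset.sum_sq_sub_sub_sum_sq_sub (x a b : ι → ℝ) :
    ∑ i ∈ s, (x i - b i) ^ 2 - ∑ i ∈ s, (x i - a i) ^ 2 =
      2 * (∑ i ∈ s, (a i - b i) * x i - ∑ i ∈ s, (a i - b i) * a i) + ∑ i ∈ s, (a i - b i) ^ 2 := by
  simp only [← Finset.sum_sub_distrib, Finset.mul_sum, ← Finset.sum_add_distrib]
  exact Finset.sum_congr rfl fun i _ => by ring

theorem measure_sum_sq_sub_le_sum_sq_sub_le [IsFiniteMeasure ν]
    (hindep : (s : Set ι).Pairwise fun i j => IndepFun (X i) (X j) ν)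
    (hL2 : ∀ i ∈ s, MemLp (X i) 2 ν) {a b : ι → ℝ} {σ2 : ℝ}
    (hmean : ∀ i ∈ s, ν[X i] = a i) (hvar : ∀ i ∈ s, variance (X i) ν ≤ σ2)
    (hD : 0 < ∑ i ∈ s, (a i - b i) ^ 2) :
    ν {ω | ∑ i ∈ s, (X i ω - b i) ^ 2 ≤ ∑ i ∈ s, (X i ω - a i) ^ 2} ≤
      ENNReal.ofReal (4 * σ2 / ∑ i ∈ s, (a i - b i) ^ 2) := by
  set D := ∑ i ∈ s, (a i - b i) ^ 2
  set T := fun ω => ∑ i ∈ s, (a i - b i) * X i ω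
  have hT : MemLp T 2 ν := memLp_finsetSum s fun i hi => (hL2 i hi).const_mul _
  have hsub : {ω | ∑ i ∈ s, (X i ω - b i) ^ 2 ≤ ∑ i ∈ s, (X i ω - a i) ^ 2} ⊆
      {ω | D / 2 ≤ |T ω - ∫ x, T x ∂ν|} := by
    intro ω hω
    have hid := Finset.sum_sq_sub_sub_sum_sq_sub (s := s) (fun i => X i ω) a b
    simp only [Set.mem_ofPred_eq, T, integral_sum_mul hL2 _ a hmean] at hω ⊢
    exact le_abs.2 (Or.inr (by linarith))
  calc ν _ ≤ ν {ω | D / 2 ≤ |T ω - ∫ x, T x ∂ν|} := measure_mono hsub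
    _ ≤ ENNReal.ofReal (variance T ν / (D / 2) ^ 2) := meas_ge_le_variance_div_sq hT (by positivity)
    _ ≤ ENNReal.ofReal (σ2 * D / (D / 2) ^ 2) := by
      gcongr; exact variance_sum_mul_le hindep hL2 _ hvar
    _ = ENNReal.ofReal (4 * σ2 / D) := by
      congr 1; field_simp; ring

end Chebyshev

section Consistency

variable {Ω : Type*} [MeasurableSpace Ω] {ν : Measure Ω} [IsFiniteMeasure ν] {X : ℕ → Ω → ℝ}
  {σ2 : ℝ}

theorem tendsto_measure_sum_sq_sub_le_sum_sq_sub
    (hindep : Pairwise fun i j => IndepFun (X i) (X j) ν) (hL2 : ∀ i, MemLp (X i) 2 ν)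
    {a b : ℕ → ℝ} (hmean : ∀ i, ν[X i] = a i) (hvar : ∀ i, variance (X i) ν ≤ σ2)
    (hsep : ¬ Summable fun i => (a i - b i) ^ 2) :
    Tendsto (fun p => ν {ω | ∑ i ∈ Finset.range p, (X i ω - b i) ^ 2 ≤
      ∑ i ∈ Finset.range p, (X i ω - a i) ^ 2}) atTop (𝓝 0) := by
  have hD : Tendsto (fun p => ∑ i ∈ Finset.range p, (a i - b i) ^ 2) atTop atTop :=
    (not_summable_iff_tendsto_nat_atTop_of_nonneg fun i => sq_nonneg _).1 hsep
  have hbound : Tendsto (fun p => ENNReal.ofReal (4 * σ2 / ∑ i ∈ Finset.range p, (a i - b i) ^ 2))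
      atTop (𝓝 0) := by
    simpa using ENNReal.tendsto_ofReal (tendsto_const_nhds.div_atTop hD)
  refine tendsto_of_tendsto_of_tendsto_of_le_of_le' tendsto_const_nhds hbound
    (Eventually.of_forall fun _ => zero_le) ?_
  filter_upwards [hD.eventually_gt_atTop 0] with p hp
  exact measure_sum_sq_sub_le_sum_sq_sub_le (hindep.set_pairwise _) (fun i _ => hL2 i)
    (fun i _ => hmean i) (fun i _ => hvar i) hp

theorem tendsto_measure_nearestMeanLabel_ne {ι : Type*} [Fintype ι] [LinearOrder ι] [Nonempty ι]
    (hindep : Pairwise fun i j => IndepFun (X i) (X j) ν) (hL2 : ∀ i, MemLp (X i) 2 ν)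
    {m : ℕ → ι → ℝ} {z : ι} (hmean : ∀ i, ν[X i] = m i z) (hvar : ∀ i, variance (X i) ν ≤ σ2)
    (hsep : ∀ v ≠ z, ¬ Summable fun i => (m i z - m i v) ^ 2) :
    Tendsto (fun p => ν {ω | nearestMeanLabel m p (fun i => X i ω) ≠ z}) atTop (𝓝 0) := by
  have hsum := tendsto_finsetSum (Finset.univ.erase z) fun v hv =>
    tendsto_measure_sum_sq_sub_le_sum_sq_sub hindep hL2 hmean hvar
      (hsep v (Finset.ne_of_mem_erase hv))
  rw [Finset.sum_const_zero] at hsum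
  refine tendsto_of_tendsto_of_tendsto_of_le_of_le tendsto_const_nhds hsum
    (fun _ => zero_le) fun p => (measure_mono fun ω hω => ?_).trans
      (measure_biUnion_finset_le _ _)
  exact Set.mem_biUnion (Finset.mem_erase.2 ⟨hω, Finset.mem_univ _⟩)
    (sum_sq_sub_nearestMeanLabel_le m p (fun i => X i ω) z)

end Consistency

theorem tendsto_measure_ne_of_tendsto_cond {Ω E α : Type*} [MeasurableSpace Ω] {μ : Measure Ω}
    [IsFiniteMeasure μ] [Fintype E] [MeasurableSpace E] [MeasurableSingletonClass E]
    {Z : Ω → E} (hZ : Measurable Z) {l : Filter α} {g : α → Ω → E}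
    (h : ∀ z, Tendsto (fun n => μ[{ω | g n ω ≠ z} | Z ⁻¹' {z}]) l (𝓝 0)) :
    Tendsto (fun n => μ {ω | g n ω ≠ Z ω}) l (𝓝 0) := by
  have hsum : Tendsto (fun n => ∑ z, μ[{ω | g n ω ≠ z} | Z ⁻¹' {z}] * μ (Z ⁻¹' {z})) l (𝓝 0) := by
    simpa using tendsto_finsetSum Finset.univ fun z _ =>
      ENNReal.Tendsto.mul_const (h z) (Or.inr (measure_ne_top μ _))
  refine tendsto_of_tendsto_of_tendsto_of_le_of_le tendsto_const_nhds hsum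
    (fun _ => zero_le) fun n => ?_
  calc μ {ω | g n ω ≠ Z ω} ≤ μ (⋃ z ∈ Finset.univ, Z ⁻¹' {z} ∩ {ω | g n ω ≠ z}) :=
        measure_mono fun ω hω => Set.mem_biUnion (Finset.mem_univ (Z ω)) ⟨rfl, hω⟩
    _ ≤ ∑ z, μ (Z ⁻¹' {z} ∩ {ω | g n ω ≠ z}) := measure_biUnion_finset_le _ _
    _ = ∑ z, μ[{ω | g n ω ≠ z} | Z ⁻¹' {z}] * μ (Z ⁻¹' {z}) :=
        Finset.sum_congr rfl fun z _ =>
          (cond_mul_eq_inter (hZ (measurableSet_singleton z)) _ μ).symm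

theorem exists_seq_ae_eventually_notMem_of_tendsto_measure {α ι : Type*} [MeasurableSpace α]
    {μ : Measure α} {l : Filter ι} [l.NeBot] {s : ι → Set α}
    (h : Tendsto (fun n => μ (s n)) l (𝓝 0)) :
    ∃ ns : ℕ → ι, ∀ᵐ x ∂μ, ∀ᶠ r in atTop, x ∉ s (ns r) := by
  have hsmall : ∀ r : ℕ, ∃ n, μ (s n) < 2⁻¹ ^ r := fun r =>
    (h.eventually (gt_mem_nhds (ENNReal.pow_pos (by simp) r))).exists
  choose ns hns using hsmall
  have hsum : ∑' r, μ (s (ns r)) ≠ ⊤ := by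
    refine ne_top_of_le_ne_top ?_ (ENNReal.tsum_le_tsum fun r => (hns r).le)
    simp [ENNReal.tsum_geometric, ENNReal.one_sub_inv_two]
  exact ⟨ns, ae_eventually_notMem hsum⟩

theorem exists_measurable_ae_eq_of_tendsto_ae {Ω E : Type*} {m m0 : MeasurableSpace Ω}
    {μ : Measure Ω} [TopologicalSpace E] [PolishSpace E] [MeasurableSpace E] [BorelSpace E]
    [Nonempty E] {g : ℕ → Ω → E} (hg : ∀ n, Measurable[m] (g n)) {Z : Ω → E}
    (h : ∀ᵐ ω ∂μ, Tendsto (g · ω) atTop (𝓝 (Z ω))) :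
    ∃ Z' : Ω → E, Measurable[m] Z' ∧ Z' =ᵐ[μ] Z := by
  have hlim : StronglyMeasurable[m] fun ω => limUnder atTop (g · ω) :=
    @StronglyMeasurable.limUnder _ _ _ m _ _ _ _ _ _ _ fun n => (hg n).stronglyMeasurable
  exact ⟨_, hlim.measurable, h.mono fun _ hω => hω.limUnder_eq⟩

theorem measurable_tail_iSup_comap {Ω β : Type*} [MeasurableSpace β] (X : ℕ → Ω → β) :
    Measurable[⨆ (i : ℕ) (_ : i ≠ 0), MeasurableSpace.comap (X i) inferInstance]
      fun ω i => X (i + 1) ω := by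
  let _ : MeasurableSpace Ω := ⨆ (i : ℕ) (_ : i ≠ 0), MeasurableSpace.comap (X i) inferInstance
  exact measurable_pi_lambda _ fun i => Measurable.of_comap_le <|
    le_iSup₂ (f := fun (i : ℕ) (_ : i ≠ 0) => MeasurableSpace.comap (X i) inferInstance)
      (i + 1) i.succ_ne_zero

theorem latent_label_recovery_general {Ω : Type*} [MeasurableSpace Ω]
    (μ : Measure Ω) [IsProbabilityMeasure μ] (K : ℕ)
    (Z : Ω → Fin K) (hZ : Measurable Z) (hzpos : ∀ z, μ (Z ⁻¹' {z}) ≠ 0)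
    (X : ℕ → Ω → ℝ)
    (m : ℕ → Fin K → ℝ) (σmax : ℝ)
    (hindep : ∀ z, iIndepFun X (μ[|Z ⁻¹' {z}]))
    (hL2 : ∀ z i, MemLp (X i) 2 (μ[|Z ⁻¹' {z}]))
    (hmean : ∀ z i, ∫ ω, X i ω ∂(μ[|Z ⁻¹' {z}]) = m i z)
    (hvar : ∀ z i, variance (X i) (μ[|Z ⁻¹' {z}]) ≤ σmax ^ 2)
    (hsep : ∀ z v : Fin K, z ≠ v → ¬ Summable (fun i => (m i z - m i v) ^ 2)) :
    ∃ Z' : Ω → Fin K,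
      Measurable[⨆ (i : ℕ) (_ : i ≠ 0), MeasurableSpace.comap (X i) inferInstance] Z' ∧
      Z' =ᵐ[μ] Z := by
  have : Nonempty (Fin K) := ⟨Z (nonempty_of_isProbabilityMeasure μ).some⟩
  set g : ℕ → Ω → Fin K := fun p ω =>
    nearestMeanLabel (fun i => m (i + 1)) p (fun i => X (i + 1) ω)
  have hg : ∀ p, Measurable[⨆ (i : ℕ) (_ : i ≠ 0), MeasurableSpace.comap (X i) inferInstance]
      (g p) := fun p => (measurable_nearestMeanLabel _ p).comp (measurable_tail_iSup_comap X)
  have herr : Tendsto (fun p => μ {ω | g p ω ≠ Z ω}) atTop (𝓝 0) :=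
    tendsto_measure_ne_of_tendsto_cond hZ fun z =>
      have := cond_isProbabilityMeasure (hzpos z)
      tendsto_measure_nearestMeanLabel_ne
        (fun i j hij => (hindep z).indepFun ((add_left_injective 1).ne hij))
        (fun i => hL2 z (i + 1)) (fun i => hmean z (i + 1)) (fun i => hvar z (i + 1))
        fun v hv => (summable_nat_add_iff 1).not.2 (hsep z v hv.symm)
  obtain ⟨ns, hns⟩ := exists_seq_ae_eventually_notMem_of_tendsto_measure herr
  exact exists_measurable_ae_eq_of_tendsto_ae (fun r => hg (ns r)) <| hns.mono fun ω hω =>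
    tendsto_const_nhds.congr' (hω.mono fun r hr => (not_not.1 hr).symm)

/-- Proposition 3.2: in the separated mixture model, the latent label `Z` can be
recovered (a.s.) from the variables `X i`, `i ≠ 0`, i.e. excluding the first one. -/
theorem latent_label_recovery {Ω : Type*} [MeasurableSpace Ω]
    (μ : Measure Ω) [IsProbabilityMeasure μ] (K : ℕ)
    (Z : Ω → Fin K) (hZ : Measurable Z) (hzpos : ∀ z, μ (Z ⁻¹' {z}) ≠ 0)
    (X : ℕ → Ω → ℝ) (hX : ∀ i, Measurable (X i))
    (m : ℕ → Fin K → ℝ) (σmax : ℝ)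
    (hindep : ∀ z, iIndepFun X (μ[|Z ⁻¹' {z}]))
    (hL2 : ∀ z i, MemLp (X i) 2 (μ[|Z ⁻¹' {z}]))
    (hmean : ∀ z i, ∫ ω, X i ω ∂(μ[|Z ⁻¹' {z}]) = m i z)
    (hvar : ∀ z i, variance (X i) (μ[|Z ⁻¹' {z}]) ≤ σmax ^ 2)
    (hsep : ∀ z v : Fin K, z ≠ v → ¬ Summable (fun i => (m i z - m i v) ^ 2)) :
    ∃ Z' : Ω → Fin K,
      Measurable[⨆ (i : ℕ) (_ : i ≠ 0), MeasurableSpace.comap (X i) inferInstance] Z' ∧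
      Z' =ᵐ[μ] Z :=
  latent_label_recovery_general μ K Z hZ hzpos X m σmax hindep hL2 hmean hvar hsep
end

section
/- (Proposition 2.5, partially linear case) Let X, Y be square-integrable real random variables, Z a random variable with E[Var[X | Z]] > 0, and suppose E[Y | X, Z] = β'(Z)·X + Γ(Z) for measurable functions β', Γ. Then β := E[Cov[X, Y | Z]] / E[Var[X | Z]] = E[w(Z)·β'(Z)], where w(Z) = Var[X | Z] / E[Var[X | Z]]. In particular, if β'(Z) = β' is a.s. constant, then β = β'. -/
/-!
Write `W = X - E[X | Z]`. Since `E[W | Z] = 0`, the conditional covariance is `E[W Y | Z]`, and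
by the tower property through `σ(X, Z)` this is `E[W (β'(Z) X + Γ(Z)) | Z]`. Pulling out the
`σ(Z)`-measurable factors gives `β'(Z) E[W X | Z] + Γ(Z) E[W | Z] = β'(Z) Var[X | Z]`; integrating
and dividing by `E[Var[X | Z]]` gives both claims.
-/

open MeasureTheory

/-- Conditional covariance `Cov[X, Y | m] = E[(X - E[X|m])(Y - E[Y|m]) | m]`. -/
noncomputable def condCov {Ω : Type*} [MeasurableSpace Ω] (μ : Measure Ω)
    (m : MeasurableSpace Ω) (X Y : Ω → ℝ) : Ω → ℝ :=
  μ[(fun ω => (X ω - (μ[X|m]) ω) * (Y ω - (μ[Y|m]) ω))|m]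

/-- Conditional variance `Var[X | m]`. -/
noncomputable def condVar {Ω : Type*} [MeasurableSpace Ω] (μ : Measure Ω)
    (m : MeasurableSpace Ω) (X : Ω → ℝ) : Ω → ℝ :=
  μ[(fun ω => (X ω - (μ[X|m]) ω) ^ 2)|m]

open Filter

section

variable {Ω : Type*} {m m' m₀ : MeasurableSpace Ω} {μ : Measure Ω}

lemma condExp_sub_condExp_ae_eq_zero (hm : m ≤ m₀) [SigmaFinite (μ.trim hm)] {X : Ω → ℝ}
    (hX : Integrable X μ) : μ[X - μ[X|m]|m] =ᵐ[μ] 0 := by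
  filter_upwards [condExp_sub hX (integrable_condExp (m := m) (f := X)) m,
    condExp_condExp_of_le le_rfl hm (f := X)] with ω hsub hidem
  simp [hsub, hidem]

lemma condVar_eq_condCov_self (X : Ω → ℝ) : condVar μ m X = condCov μ m X X := by
  simp only [condVar, condCov, sq]

lemma condCov_ae_eq_condExp_mul [IsFiniteMeasure μ] (hm : m ≤ m₀) {X Y : Ω → ℝ}
    (hX : MemLp X 2 μ) (hY : MemLp Y 2 μ) :
    condCov μ m X Y =ᵐ[μ] μ[(X - μ[X|m]) * Y|m] := by
  set W := X - μ[X|m]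
  have hW : MemLp W 2 μ := hX.sub (hX.condExp one_le_two)
  have hEY : MemLp (μ[Y|m]) 2 μ := hY.condExp one_le_two
  have hsplit : (fun ω => W ω * (Y ω - μ[Y|m] ω)) = W * Y - μ[Y|m] * W := by
    funext ω; simp only [Pi.sub_apply, Pi.mul_apply]; ring
  have hpull : μ[μ[Y|m] * W|m] =ᵐ[μ] μ[Y|m] * μ[W|m] :=
    condExp_mul_of_stronglyMeasurable_left stronglyMeasurable_condExp
      (hEY.integrable_mul hW) (hW.integrable one_le_two)
  change μ[fun ω => W ω * (Y ω - μ[Y|m] ω)|m] =ᵐ[μ] _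
  rw [hsplit]
  filter_upwards [condExp_sub (hW.integrable_mul hY) (hEY.integrable_mul hW) m, hpull,
    condExp_sub_condExp_ae_eq_zero hm (hX.integrable one_le_two)] with ω hsub hpullω hzero
  simp [hsub, hpullω, hzero, W]

lemma integrable_indicator_mul_of_norm_le {s : Set Ω} (hs : MeasurableSet s) {f g : Ω → ℝ}
    {c : ℝ} (hf : AEStronglyMeasurable f μ) (hfs : ∀ ω ∈ s, ‖f ω‖ ≤ c) (hg : Integrable g μ) :
    Integrable (s.indicator f * g) μ := by
  have hon : IntegrableOn (fun ω => f ω * g ω) s μ :=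
    hg.restrict.bdd_mul hf.restrict ((ae_restrict_iff' hs).2 (Eventually.of_forall hfs))
  rw [show s.indicator f * g = s.indicator (fun ω => f ω * g ω) from
    funext fun _ => (Set.indicator_mul_left _ _ _).symm]
  exact hon.integrable_indicator hs

lemma condExp_mul_add_mul_of_stronglyMeasurable (hm : m ≤ m₀) {f₁ f₂ g₁ g₂ : Ω → ℝ}
    (hf₁ : StronglyMeasurable[m] f₁) (hf₂ : StronglyMeasurable[m] f₂)
    (hg₁ : Integrable g₁ μ) (hg₂ : Integrable g₂ μ) (hfg : Integrable (f₁ * g₁ + f₂ * g₂) μ) :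
    μ[f₁ * g₁ + f₂ * g₂|m] =ᵐ[μ] f₁ * μ[g₁|m] + f₂ * μ[g₂|m] := by
  -- The products `fᵢ gᵢ` need not be integrable, so pull out on the `m`-measurable sets where
  -- both factors are bounded by `n`, which exhaust `Ω`.
  set s : ℕ → Set Ω := fun n => {ω | |f₁ ω| ≤ n ∧ |f₂ ω| ≤ n}
  have hs : ∀ n, MeasurableSet[m] (s n) := fun n =>
    (measurable_abs.comp hf₁.measurable measurableSet_Iic).inter
      (measurable_abs.comp hf₂.measurable measurableSet_Iic)
  have htrunc : ∀ n, ∀ᵐ ω ∂μ, ω ∈ s n →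
      μ[f₁ * g₁ + f₂ * g₂|m] ω = f₁ ω * μ[g₁|m] ω + f₂ ω * μ[g₂|m] ω := by
    intro n
    have hint : ∀ {f g : Ω → ℝ}, StronglyMeasurable[m] f → (∀ ω ∈ s n, ‖f ω‖ ≤ n) →
        Integrable g μ → Integrable ((s n).indicator f * g) μ := fun hf hfn hg =>
      integrable_indicator_mul_of_norm_le (hm _ (hs n)) (hf.mono hm).aestronglyMeasurable hfn hg
    have hpull : ∀ {f g : Ω → ℝ}, StronglyMeasurable[m] f → (∀ ω ∈ s n, ‖f ω‖ ≤ n) →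
        Integrable g μ → μ[(s n).indicator f * g|m] =ᵐ[μ] (s n).indicator f * μ[g|m] :=
      fun hf hfn hg => condExp_mul_of_stronglyMeasurable_left (hf.indicator (hs n))
        (hint hf hfn hg) hg
    have hsplit : (s n).indicator (f₁ * g₁ + f₂ * g₂) =
        (s n).indicator f₁ * g₁ + (s n).indicator f₂ * g₂ := by
      funext ω
      by_cases hω : ω ∈ s n <;> simp [hω]
    filter_upwards [condExp_indicator hfg (hs n),
      condExp_add (hint hf₁ (fun _ h => h.1) hg₁) (hint hf₂ (fun _ h => h.2) hg₂) m,
      hpull hf₁ (fun _ h => h.1) hg₁, hpull hf₂ (fun _ h => h.2) hg₂]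
      with ω hind hadd h₁ h₂ hmem
    rw [hsplit] at hind
    simpa [Set.indicator_of_mem hmem, hadd, h₁, h₂] using hind.symm
  filter_upwards [ae_all_iff.2 htrunc] with ω hω
  obtain ⟨n, hn⟩ := exists_nat_ge (max |f₁ ω| |f₂ ω|)
  exact hω n ⟨(le_max_left _ _).trans hn, (le_max_right _ _).trans hn⟩

lemma condCov_ae_eq_mul_condVar [IsFiniteMeasure μ] (hm : m ≤ m') (hm' : m' ≤ m₀)
    {X Y f g : Ω → ℝ} (hXm' : StronglyMeasurable[m'] X) (hX : MemLp X 2 μ) (hY : MemLp Y 2 μ)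
    (hf : StronglyMeasurable[m] f) (hg : StronglyMeasurable[m] g)
    (hlin : μ[Y|m'] =ᵐ[μ] f * X + g) :
    condCov μ m X Y =ᵐ[μ] f * condVar μ m X := by
  have hm₀ : m ≤ m₀ := hm.trans hm'
  set W := X - μ[X|m]
  have hW : MemLp W 2 μ := hX.sub (hX.condExp one_le_two)
  have hWm' : StronglyMeasurable[m'] W := hXm'.sub (stronglyMeasurable_condExp.mono hm)
  have hEY : MemLp (μ[Y|m']) 2 μ := hY.condExp one_le_two
  have hinner : μ[W * Y|m'] =ᵐ[μ] f * (W * X) + g * W := by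
    filter_upwards [condExp_mul_of_stronglyMeasurable_left hWm' (hW.integrable_mul hY)
      (hY.integrable one_le_two), hlin] with ω hpull hlinω
    simp only [Pi.mul_apply, Pi.add_apply] at hpull hlinω ⊢
    rw [hpull, hlinω]; ring
  have hint : Integrable (f * (W * X) + g * W) μ :=
    (hW.integrable_mul hEY).congr (by
      filter_upwards [hlin] with ω hlinω
      simp only [Pi.mul_apply, Pi.add_apply, hlinω]; ring)
  have hvar : μ[W * X|m] =ᵐ[μ] condVar μ m X := by
    rw [condVar_eq_condCov_self]; exact (condCov_ae_eq_condExp_mul hm₀ hX hX).symm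
  filter_upwards [condCov_ae_eq_condExp_mul hm₀ hX hY,
    (condExp_condExp_of_le hm hm' (f := W * Y)).symm, condExp_congr_ae (m := m) hinner,
    condExp_mul_add_mul_of_stronglyMeasurable hm₀ hf hg
      (hW.integrable_mul hX) (hW.integrable one_le_two) hint,
    hvar, condExp_sub_condExp_ae_eq_zero hm₀ (hX.integrable one_le_two)]
    with ω hcov htower hcongr hsplit hvarω hzero
  simp [hcov, htower, hcongr, hsplit, hvarω, hzero, W]

end

theorem assumption_lean_partially_linear_general {Ω E : Type*} [MeasurableSpace Ω]
    [MeasurableSpace E] (μ : Measure Ω) [IsProbabilityMeasure μ]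
    (X Y : Ω → ℝ) (Z : Ω → E)
    (hX : Measurable X) (hZ : Measurable Z)
    (hX2 : MemLp X 2 μ) (hY2 : MemLp Y 2 μ)
    (b G : E → ℝ) (hb : Measurable b) (hG : Measurable G)
    (hlin : (μ[Y|MeasurableSpace.comap (fun ω => (X ω, Z ω)) inferInstance]) =ᵐ[μ]
      fun ω => b (Z ω) * X ω + G (Z ω))
    (hEVar : 0 < ∫ ω, condVar μ (MeasurableSpace.comap Z inferInstance) X ω ∂μ) :
    (∫ ω, condCov μ (MeasurableSpace.comap Z inferInstance) X Y ω ∂μ) /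
        (∫ ω, condVar μ (MeasurableSpace.comap Z inferInstance) X ω ∂μ) =
      ∫ ω, (condVar μ (MeasurableSpace.comap Z inferInstance) X ω /
          (∫ ω', condVar μ (MeasurableSpace.comap Z inferInstance) X ω' ∂μ)) *
        b (Z ω) ∂μ ∧
    ∀ c : ℝ, (∀ᵐ ω ∂μ, b (Z ω) = c) →
      (∫ ω, condCov μ (MeasurableSpace.comap Z inferInstance) X Y ω ∂μ) /
        (∫ ω, condVar μ (MeasurableSpace.comap Z inferInstance) X ω ∂μ) = c := by
  have hZm : Measurable[MeasurableSpace.comap Z inferInstance] Z := Measurable.of_comap_le le_rfl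
  have hXZm : Measurable[MeasurableSpace.comap (fun ω => (X ω, Z ω)) inferInstance]
      (fun ω => (X ω, Z ω)) := Measurable.of_comap_le le_rfl
  have hcov := condCov_ae_eq_mul_condVar (μ := μ) (f := fun ω => b (Z ω))
    (g := fun ω => G (Z ω)) (measurable_iff_comap_le.1 hXZm.snd) (hX.prodMk hZ).comap_le
    hXZm.fst.stronglyMeasurable hX2 hY2 (hb.comp hZm).stronglyMeasurable
    (hG.comp hZm).stronglyMeasurable hlin
  rw [integral_congr_ae hcov]
  set V := condVar μ (MeasurableSpace.comap Z inferInstance) X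
  refine ⟨?_, fun c hc => ?_⟩
  · rw [← integral_div]
    congr 1; funext ω
    simp only [Pi.mul_apply]; ring
  · rw [integral_congr_ae (g := fun ω => c * V ω) (by filter_upwards [hc] with ω hω; simp [hω]),
      integral_const_mul, mul_div_cancel_right₀ _ hEVar.ne']

theorem assumption_lean_partially_linear {Ω E : Type*} [MeasurableSpace Ω]
    [MeasurableSpace E] (μ : Measure Ω) [IsProbabilityMeasure μ]
    (X Y : Ω → ℝ) (Z : Ω → E)
    (hX : Measurable X) (hY : Measurable Y) (hZ : Measurable Z)
    (hX2 : MemLp X 2 μ) (hY2 : MemLp Y 2 μ)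
    (b G : E → ℝ) (hb : Measurable b) (hG : Measurable G)
    (hlin : (μ[Y|MeasurableSpace.comap (fun ω => (X ω, Z ω)) inferInstance]) =ᵐ[μ]
      fun ω => b (Z ω) * X ω + G (Z ω))
    (hEVar : 0 < ∫ ω, condVar μ (MeasurableSpace.comap Z inferInstance) X ω ∂μ) :
    (∫ ω, condCov μ (MeasurableSpace.comap Z inferInstance) X Y ω ∂μ) /
        (∫ ω, condVar μ (MeasurableSpace.comap Z inferInstance) X ω ∂μ) =
      ∫ ω, (condVar μ (MeasurableSpace.comap Z inferInstance) X ω /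
          (∫ ω', condVar μ (MeasurableSpace.comap Z inferInstance) X ω' ∂μ)) *
        b (Z ω) ∂μ ∧
    ∀ c : ℝ, (∀ᵐ ω ∂μ, b (Z ω) = c) →
      (∫ ω, condCov μ (MeasurableSpace.comap Z inferInstance) X Y ω ∂μ) /
        (∫ ω, condVar μ (MeasurableSpace.comap Z inferInstance) X ω ∂μ) = c :=
  assumption_lean_partially_linear_general μ X Y Z hX hZ hX2 hY2 b G hb hG hlin hEVar
end

section
/- (Nearest-mean event inclusion) Let X ∈ ℝᵖ be a random vector, μ, ν, μ̌, ν̌ ∈ ℝᵖ with R₁ = ‖μ − μ̌‖₂/‖μ − ν‖₂ ≤ 1/10 and R₂ = ‖ν − ν̌‖₂/‖μ − ν‖₂ ≤ 1/10. Then the event {‖X − ν̌‖₂ < ‖X − μ̌‖₂} is contained in the event {⟨X − μ, μ̌ − ν̌⟩ < −(6/25)‖μ − ν‖₂²}. -/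
/-!
Expanding `‖x - ν̌‖² = ‖x - μ̌‖² + 2⟪x - μ̌, μ̌ - ν̌⟫ + ‖μ̌ - ν̌‖²`, the event `‖x - ν̌‖ < ‖x - μ̌‖`
forces `⟪x - μ̌, μ̌ - ν̌⟫ < -‖μ̌ - ν̌‖² / 2`. Moving the base point from `μ̌` to `μ` costs at most
`‖μ - μ̌‖ ‖μ̌ - ν̌‖` by Cauchy–Schwarz. With `d = ‖μ - ν‖` and `B = ‖μ̌ - ν̌‖ ≥ 4d/5` (triangle
inequality), the bound `-B²/2 + dB/10 ≤ -6d²/25` is the factorisation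
`B²/2 - dB/10 - 6d²/25 = (B - 4d/5)(B/2 + 3d/10)`.
-/

open scoped RealInnerProductSpace

section InnerProductSpace

variable {E : Type*} [NormedAddCommGroup E] [InnerProductSpace ℝ E]

theorem inner_sub_lt_neg_half_norm_sq_of_norm_sub_lt {x a b : E} (h : ‖x - b‖ < ‖x - a‖) :
    ⟪x - a, a - b⟫ < -(1 / 2) * ‖a - b‖ ^ 2 := by
  have hexpand : ‖x - b‖ ^ 2 = ‖x - a‖ ^ 2 + 2 * ⟪x - a, a - b⟫ + ‖a - b‖ ^ 2 := by
    rw [← norm_add_sq_real, sub_add_sub_cancel]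
  have hsq : ‖x - b‖ ^ 2 < ‖x - a‖ ^ 2 := by gcongr
  linarith

theorem inner_sub_lt_of_norm_sub_lt {x a b m : E} (h : ‖x - b‖ < ‖x - a‖) :
    ⟪x - m, a - b⟫ < -(1 / 2) * ‖a - b‖ ^ 2 + ‖m - a‖ * ‖a - b‖ := by
  have hshift : ⟪x - m, a - b⟫ = ⟪x - a, a - b⟫ + ⟪a - m, a - b⟫ := by
    rw [← inner_add_left, sub_add_sub_cancel]
  have hcs : ⟪a - m, a - b⟫ ≤ ‖m - a‖ * ‖a - b‖ := by
    simpa only [norm_sub_rev a m] using real_inner_le_norm (a - m) (a - b)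
  linarith [inner_sub_lt_neg_half_norm_sq_of_norm_sub_lt h]

end InnerProductSpace

theorem one_sub_two_mul_norm_sub_le {E : Type*} [SeminormedAddCommGroup E] {μ ν μ' ν' : E}
    {r : ℝ} (hμ : ‖μ - μ'‖ ≤ r * ‖μ - ν‖) (hν : ‖ν - ν'‖ ≤ r * ‖μ - ν‖) :
    (1 - 2 * r) * ‖μ - ν‖ ≤ ‖μ' - ν'‖ := by
  have htri : ‖μ - ν‖ ≤ ‖μ - μ'‖ + ‖μ' - ν'‖ + ‖ν - ν'‖ := by
    simpa only [dist_eq_norm, norm_sub_rev ν' ν] using dist_triangle4 μ μ' ν' ν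
  linarith

theorem nearest_mean_event_inclusion_general {p : ℕ}
    (μv νv μc νc x : EuclideanSpace ℝ (Fin p))
    (hR1 : ‖μv - μc‖ ≤ (1 / 10) * ‖μv - νv‖)
    (hR2 : ‖νv - νc‖ ≤ (1 / 10) * ‖μv - νv‖)
    (hx : ‖x - νc‖ < ‖x - μc‖) :
    ⟪x - μv, μc - νc⟫ < -(6 / 25) * ‖μv - νv‖ ^ 2 := by
  set d := ‖μv - νv‖
  set B := ‖μc - νc‖
  have hB : (4 / 5) * d ≤ B := by linarith [one_sub_two_mul_norm_sub_le hR1 hR2]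
  have hd : 0 ≤ d := norm_nonneg _
  calc ⟪x - μv, μc - νc⟫ < -(1 / 2) * B ^ 2 + ‖μv - μc‖ * B := inner_sub_lt_of_norm_sub_lt hx
    _ ≤ -(1 / 2) * B ^ 2 + (1 / 10) * d * B := by gcongr
    _ ≤ -(6 / 25) * d ^ 2 := by
      nlinarith [mul_nonneg (sub_nonneg.mpr hB) (by positivity : 0 ≤ B / 2 + 3 / 10 * d)]

theorem nearest_mean_event_inclusion {p : ℕ}
    (μv νv μc νc x : EuclideanSpace ℝ (Fin p)) (hμν : μv ≠ νv)
    (hR1 : ‖μv - μc‖ ≤ (1 / 10) * ‖μv - νv‖)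
    (hR2 : ‖νv - νc‖ ≤ (1 / 10) * ‖μv - νv‖)
    (hx : ‖x - νc‖ < ‖x - μc‖) :
    ⟪x - μv, μc - νc⟫ < -(6 / 25) * ‖μv - νv‖ ^ 2 :=
  nearest_mean_event_inclusion_general μv νv μc νc x hR1 hR2 hx
end
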